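/- arXiv:2401.05876 — 5 statements merged into one kernel-verified Lean document; each statement's English description precedes it below -/
import Mathlib

section
/- Let n, d be natural numbers, let Φ be a real n×d matrix, let c > 0 and Γ > 0 be real numbers, and let v, p ∈ ℝ^d with ‖p‖² ≤ Γ (Euclidean norm). Then |vᵀ p − (Φ v)ᵀ (Φ Φᵀ + c I)⁻¹ Φ p| ≤ √Γ · √(vᵀ v − (Φ v)ᵀ (Φ Φᵀ + c I)⁻¹ Φ v). -/
open Matrix

/-!
Write `A = Φ Φᵀ + c I` and `α = A⁻¹ Φ v`. Since `A⁻¹` is symmetric, the error is `rᵀ p` for the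
residual `r = v - Φᵀ α`, so Cauchy–Schwarz bounds it by `‖r‖ ‖p‖ ≤ √Γ ‖r‖`. Multiplying out and
using `Φ Φᵀ α = Φ v - c α` gives `‖r‖² + c ‖α‖² = vᵀ v - (Φ v)ᵀ α`, so `‖r‖` is at most the
power function.
-/

namespace Matrix

variable {m n : Type*} [Fintype m] [Fintype n]

lemma dotProduct_sq_le_dotProduct_self_mul (a b : n → ℝ) :
    (a ⬝ᵥ b) ^ 2 ≤ (a ⬝ᵥ a) * (b ⬝ᵥ b) := by
  simpa only [dotProduct, sq] using Finset.sum_mul_sq_le_sq_mul_sq Finset.univ a b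

lemma real_dotProduct_self_nonneg (a : n → ℝ) : 0 ≤ a ⬝ᵥ a := by
  simpa using dotProduct_star_self_nonneg a

variable [DecidableEq m]

lemma posDef_mul_transpose_add_smul_one (Φ : Matrix m n ℝ) {c : ℝ} (hc : 0 < c) :
    (Φ * Φᵀ + c • (1 : Matrix m m ℝ)).PosDef :=
  PosDef.posSemidef_add (posSemidef_self_mul_conjTranspose Φ) (PosDef.one.smul hc)

lemma sub_transpose_mulVec_dotProduct_self_add (Φ : Matrix m n ℝ) (c : ℝ) (v : n → ℝ)
    {α : m → ℝ} (hα : (Φ * Φᵀ + c • 1) *ᵥ α = Φ *ᵥ v) :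
    (v - Φᵀ *ᵥ α) ⬝ᵥ (v - Φᵀ *ᵥ α) + c * (α ⬝ᵥ α) = v ⬝ᵥ v - (Φ *ᵥ v) ⬝ᵥ α := by
  have hcross : v ⬝ᵥ (Φᵀ *ᵥ α) = (Φ *ᵥ v) ⬝ᵥ α := by
    rw [dotProduct_mulVec, vecMul_transpose]
  have hgram : (Φᵀ *ᵥ α) ⬝ᵥ (Φᵀ *ᵥ α) = α ⬝ᵥ (Φ *ᵥ v) - c * (α ⬝ᵥ α) := by
    rw [add_mulVec, ← mulVec_mulVec, smul_mulVec, one_mulVec] at hα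
    rw [← hα, dotProduct_add, dotProduct_smul, smul_eq_mul, dotProduct_mulVec α Φ,
      ← mulVec_transpose]
    ring
  rw [sub_dotProduct, dotProduct_sub, dotProduct_sub, dotProduct_comm (Φᵀ *ᵥ α) v, hcross,
    hgram, dotProduct_comm α]
  ring

end Matrix

section Ridge

variable {m n : Type*} [Fintype m] [Fintype n] [DecidableEq m]

noncomputable def ridgeCoeffs (Φ : Matrix m n ℝ) (c : ℝ) (v : n → ℝ) : m → ℝ :=
  (Φ * Φᵀ + c • (1 : Matrix m m ℝ))⁻¹ *ᵥ (Φ *ᵥ v)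

noncomputable def ridgeResidual (Φ : Matrix m n ℝ) (c : ℝ) (v : n → ℝ) : n → ℝ :=
  v - Φᵀ *ᵥ ridgeCoeffs Φ c v

lemma sub_dotProduct_inv_eq_ridgeResidual_dotProduct (Φ : Matrix m n ℝ) (c : ℝ) (v p : n → ℝ) :
    v ⬝ᵥ p - (Φ *ᵥ v) ⬝ᵥ ((Φ * Φᵀ + c • (1 : Matrix m m ℝ))⁻¹ *ᵥ (Φ *ᵥ p)) =
      ridgeResidual Φ c v ⬝ᵥ p := by
  have hsymm : (Φ * Φᵀ + c • (1 : Matrix m m ℝ))⁻¹ᵀ = (Φ * Φᵀ + c • 1)⁻¹ := by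
    rw [transpose_nonsing_inv, transpose_add, transpose_mul, transpose_transpose,
      transpose_smul, transpose_one]
  rw [ridgeResidual, ridgeCoeffs, sub_dotProduct, dotProduct_mulVec, dotProduct_mulVec,
    ← mulVec_transpose, ← mulVec_transpose, hsymm]

lemma ridgeResidual_dotProduct_self_le (Φ : Matrix m n ℝ) {c : ℝ} (hc : 0 < c) (v : n → ℝ) :
    ridgeResidual Φ c v ⬝ᵥ ridgeResidual Φ c v ≤ v ⬝ᵥ v - (Φ *ᵥ v) ⬝ᵥ ridgeCoeffs Φ c v := by
  have hA := (posDef_mul_transpose_add_smul_one Φ hc).isUnit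
  have hα : (Φ * Φᵀ + c • 1) *ᵥ ridgeCoeffs Φ c v = Φ *ᵥ v := by
    rw [ridgeCoeffs, mulVec_mulVec, mul_nonsing_inv _ ((isUnit_iff_isUnit_det _).mp hA),
      one_mulVec]
  rw [← sub_transpose_mulVec_dotProduct_self_add Φ c v hα]
  exact le_add_of_nonneg_right (mul_nonneg hc.le (real_dotProduct_self_nonneg _))

end Ridge

theorem lemma1_estimation_bound_general (n d : ℕ) (Φ : Matrix (Fin n) (Fin d) ℝ) (c Γ : ℝ)
    (hc : 0 < c) (v p : Fin d → ℝ) (hp : p ⬝ᵥ p ≤ Γ) :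
    |v ⬝ᵥ p - (Φ *ᵥ v) ⬝ᵥ ((Φ * Φᵀ + c • (1 : Matrix (Fin n) (Fin n) ℝ))⁻¹ *ᵥ (Φ *ᵥ p))| ≤
      Real.sqrt Γ *
        Real.sqrt (v ⬝ᵥ v -
          (Φ *ᵥ v) ⬝ᵥ ((Φ * Φᵀ + c • (1 : Matrix (Fin n) (Fin n) ℝ))⁻¹ *ᵥ (Φ *ᵥ v))) := by
  set r := ridgeResidual Φ c v
  have hr : r ⬝ᵥ r ≤ v ⬝ᵥ v - (Φ *ᵥ v) ⬝ᵥ ridgeCoeffs Φ c v :=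
    ridgeResidual_dotProduct_self_le Φ hc v
  have hr₀ := real_dotProduct_self_nonneg r
  rw [sub_dotProduct_inv_eq_ridgeResidual_dotProduct]
  calc |r ⬝ᵥ p| ≤ √((r ⬝ᵥ r) * (p ⬝ᵥ p)) :=
        Real.abs_le_sqrt (dotProduct_sq_le_dotProduct_self_mul r p)
    _ ≤ √(Γ * (v ⬝ᵥ v - (Φ *ᵥ v) ⬝ᵥ ridgeCoeffs Φ c v)) := by
        rw [mul_comm Γ]
        exact Real.sqrt_le_sqrt
          (mul_le_mul hr hp (real_dotProduct_self_nonneg p) (hr₀.trans hr))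
    _ = √Γ * √(v ⬝ᵥ v - (Φ *ᵥ v) ⬝ᵥ ridgeCoeffs Φ c v) :=
        Real.sqrt_mul' Γ (hr₀.trans hr)

theorem lemma1_estimation_bound (n d : ℕ) (Φ : Matrix (Fin n) (Fin d) ℝ) (c Γ : ℝ)
    (hc : 0 < c) (hΓ : 0 < Γ) (v p : Fin d → ℝ) (hp : p ⬝ᵥ p ≤ Γ) :
    |v ⬝ᵥ p - (Φ *ᵥ v) ⬝ᵥ ((Φ * Φᵀ + c • (1 : Matrix (Fin n) (Fin n) ℝ))⁻¹ *ᵥ (Φ *ᵥ p))| ≤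
      Real.sqrt Γ *
        Real.sqrt (v ⬝ᵥ v -
          (Φ *ᵥ v) ⬝ᵥ ((Φ * Φᵀ + c • (1 : Matrix (Fin n) (Fin n) ℝ))⁻¹ *ᵥ (Φ *ᵥ v))) :=
  lemma1_estimation_bound_general n d Φ c Γ hc v p hp
end

section
/- For every real number p with 0 < p < 1 and p ≠ 1/2, and every real number t, one has p · exp(t(1 − p)) + (1 − p) · exp(−t p) ≤ exp(t² (1 − 2p) / (4 (ln(1 − p) − ln p))). Equivalently, a Bernoulli random variable with success probability p, after centering by its mean p, is σ-sub-Gaussian with variance proxy σ = (1 − 2p)/(2(ln(1 − p) − ln p)): its moment generating function E[exp(t(X − p))] is bounded by exp(σ t²/2). -/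
/-!
With `y` half the log-odds, `p * exp (2 * y) = 1 - p`, one has `tanh y = 1 - 2p` and the centered
Bernoulli moment generating function equals `exp (t (1/2 - p)) * cosh (t/2 - y) / cosh y`. The bound
is then the tangent line at `u = y²` of `u ↦ log (cosh (√u))`, which is concave because
`tanh x / x` is decreasing on `(0, ∞)`.
-/

open Real Set

namespace Real

theorem hasDerivAt_tanh (x : ℝ) : HasDerivAt tanh (1 / cosh x ^ 2) x := by
  rw [show tanh = fun y => sinh y / cosh y from funext tanh_eq_sinh_div_cosh]
  refine ((hasDerivAt_sinh x).fun_div (hasDerivAt_cosh x) (cosh_pos x).ne').congr_deriv ?_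
  rw [← cosh_sq_sub_sinh_sq x]
  ring

theorem antitoneOn_tanh_div_self : AntitoneOn (fun x => tanh x / x) (Ioi 0) := by
  refine antitoneOn_of_hasDerivWithinAt_nonpos (convex_Ioi 0)
    (fun x hx => ((hasDerivAt_tanh x).div (hasDerivAt_id x) (ne_of_gt hx)).continuousAt
      |>.continuousWithinAt)
    (fun x hx => ((hasDerivAt_tanh x).div (hasDerivAt_id x)
      (ne_of_gt (interior_subset hx))).hasDerivWithinAt) fun x hx => ?_
  rw [interior_Ioi, mem_Ioi] at hx
  have hsinh : x ≤ sinh x * cosh x := (self_le_sinh_iff.2 hx.le).trans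
    (le_mul_of_one_le_right (sinh_nonneg_iff.2 hx.le) (one_le_cosh x))
  have hcosh := cosh_pos x
  rw [tanh_eq_sinh_div_cosh, id]
  apply div_nonpos_of_nonpos_of_nonneg _ (sq_nonneg x)
  rw [sub_nonpos, div_mul_eq_mul_div, one_mul, mul_one, div_le_div_iff₀ (by positivity) hcosh]
  nlinarith

theorem log_cosh_le_of_pos {y : ℝ} (hy : 0 < y) (x : ℝ) :
    log (cosh x) ≤ log (cosh y) + tanh y / (2 * y) * (x ^ 2 - y ^ 2) := by
  set k := tanh y / y
  let G : ℝ → ℝ := fun x => log (cosh x) - k / 2 * x ^ 2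
  have hG (x : ℝ) : HasDerivAt G (tanh x - k * x) x := by
    refine (((hasDerivAt_cosh x).log (cosh_pos x).ne').fun_sub
      ((hasDerivAt_pow 2 x).const_mul (k / 2))).congr_deriv ?_
    rw [tanh_eq_sinh_div_cosh]; ring
  have hG' {x : ℝ} (hx : 0 < x) : tanh x - k * x = x * (tanh x / x - k) := by
    field_simp
  have hmono : MonotoneOn G (Icc 0 y) := by
    refine monotoneOn_of_hasDerivWithinAt_nonneg (convex_Icc 0 y)
      (fun x _ => (hG x).continuousAt.continuousWithinAt)
      (fun x _ => (hG x).hasDerivWithinAt) fun x hx => ?_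
    rw [interior_Icc] at hx
    rw [hG' hx.1]
    exact mul_nonneg hx.1.le (sub_nonneg.2 (antitoneOn_tanh_div_self hx.1 hy hx.2.le))
  have hanti : AntitoneOn G (Ici y) := by
    refine antitoneOn_of_hasDerivWithinAt_nonpos (convex_Ici y)
      (fun x _ => (hG x).continuousAt.continuousWithinAt)
      (fun x _ => (hG x).hasDerivWithinAt) fun x hx => ?_
    rw [interior_Ici, mem_Ioi] at hx
    rw [hG' (hy.trans hx)]
    exact mul_nonpos_of_nonneg_of_nonpos (hy.trans hx).le
      (sub_nonpos.2 (antitoneOn_tanh_div_self hy (hy.trans hx) hx.le))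
  have hGabs : G |x| ≤ G y := by
    rcases le_total |x| y with h | h
    · exact hmono ⟨abs_nonneg x, h⟩ ⟨hy.le, le_rfl⟩ h
    · exact hanti (mem_Ici.2 le_rfl) h h
  have hk : tanh y / (2 * y) = k / 2 := by rw [div_div, mul_comm]
  simp only [G, cosh_abs, sq_abs] at hGabs
  rw [hk]
  linarith

theorem cosh_le_cosh_mul_exp {y : ℝ} (hy : y ≠ 0) (x : ℝ) :
    cosh x ≤ cosh y * exp (tanh y / (2 * y) * (x ^ 2 - y ^ 2)) := by
  wlog hy0 : 0 < y generalizing y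
  · have := this (neg_ne_zero.2 hy) (neg_pos.2 (lt_of_le_of_ne (not_lt.1 hy0) hy))
    rwa [cosh_neg, tanh_neg, neg_sq, mul_neg, neg_div_neg_eq] at this
  calc cosh x = exp (log (cosh x)) := (exp_log (cosh_pos x)).symm
    _ ≤ exp (log (cosh y) + tanh y / (2 * y) * (x ^ 2 - y ^ 2)) :=
      exp_le_exp.2 (log_cosh_le_of_pos hy0 x)
    _ = _ := by rw [exp_add, exp_log (cosh_pos y)]

theorem tanh_eq_of_mul_exp_two_mul_eq {p y : ℝ} (h : p * exp (2 * y) = 1 - p) :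
    tanh y = 1 - 2 * p := by
  rw [two_mul, exp_add] at h
  have := exp_pos y
  rw [tanh_eq_sinh_div_cosh, sinh_eq, cosh_eq, exp_neg]
  field_simp
  linear_combination 2 * h

end Real

theorem bernoulli_mgf_eq_cosh {p y : ℝ} (h : p * exp (2 * y) = 1 - p) (t : ℝ) :
    p * exp (t * (1 - p)) + (1 - p) * exp (-(t * p)) =
      exp (t * (1 / 2 - p)) * cosh (t / 2 - y) / cosh y := by
  have h1 : exp (t * (1 - p)) = exp (t * (1 / 2 - p)) * exp (t / 2) := by
    rw [← exp_add]; ring_nf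
  have h2 : exp (-(t * p)) = exp (t * (1 / 2 - p)) * (exp (t / 2))⁻¹ := by
    rw [← exp_neg, ← exp_add]; ring_nf
  have h3 : cosh (t / 2 - y) = (exp (t / 2) / exp y + exp y / exp (t / 2)) / 2 := by
    rw [cosh_eq, neg_sub, exp_sub, exp_sub]
  rw [two_mul, exp_add] at h
  have := exp_pos y
  have := exp_pos (t / 2)
  rw [eq_div_iff (cosh_pos y).ne', h1, h2, h3, cosh_eq, exp_neg]
  field_simp
  linear_combination (exp (t / 2) ^ 2 - 1) * h

theorem bernoulli_kearns_saul (p t : ℝ) (hp0 : 0 < p) (hp1 : p < 1) (hp : p ≠ 1 / 2) :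
    p * Real.exp (t * (1 - p)) + (1 - p) * Real.exp (-(t * p)) ≤
      Real.exp (t ^ 2 * (1 - 2 * p) / (4 * (Real.log (1 - p) - Real.log p))) := by
  set y := (log (1 - p) - log p) / 2
  have hy : p * exp (2 * y) = 1 - p := by
    rw [mul_div_cancel₀ _ two_ne_zero, exp_sub, exp_log (sub_pos.2 hp1), exp_log hp0]
    field_simp
  have hy0 : y ≠ 0 := by
    refine div_ne_zero (sub_ne_zero.2 fun h => hp ?_) two_ne_zero
    have := log_injOn_pos (mem_Ioi.2 (sub_pos.2 hp1)) (mem_Ioi.2 hp0) h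
    linarith
  calc p * exp (t * (1 - p)) + (1 - p) * exp (-(t * p))
      = exp (t * (1 / 2 - p)) * cosh (t / 2 - y) / cosh y := bernoulli_mgf_eq_cosh hy t
    _ ≤ exp (t * (1 / 2 - p)) * (cosh y * exp (tanh y / (2 * y) * ((t / 2 - y) ^ 2 - y ^ 2)))
          / cosh y := by
      gcongr; exact cosh_le_cosh_mul_exp hy0 _
    _ = exp (t ^ 2 * (1 - 2 * p) / (4 * (2 * y))) := by
      rw [mul_div_assoc, mul_div_cancel_left₀ _ (cosh_pos y).ne', ← exp_add,
        tanh_eq_of_mul_exp_two_mul_eq hy]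
      congr 1
      field_simp
      ring
    _ = _ := by rw [mul_div_cancel₀ _ two_ne_zero]
end

section
/- Let μ ∈ ℝ, σ² ≥ 0, and γ > 0, and let X and X' be independent, each distributed according to the Gaussian measure on ℝ with mean μ and variance σ². Then E[exp(−(X − X')²/(2γ²))] = γ / √(γ² + 2σ²). Equivalently, the double integral of exp(−(x − x')²/(2γ²)) with respect to the product of the Gaussian measure with mean μ and variance σ² with itself equals γ / √(γ² + 2σ²). -/
open MeasureTheory ProbabilityTheory NNReal Real

lemma integral_gaussianReal_eq (m : ℝ) {v : ℝ≥0} (hv : v ≠ 0) (f : ℝ → ℝ) :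
    ∫ y, f y ∂(gaussianReal m v) = ∫ y, gaussianPDFReal m v y * f y := by
  rw [gaussianReal_of_var_ne_zero _ hv, gaussianPDF_def]
  have h : (fun x => ENNReal.ofReal (gaussianPDFReal m v x))
      = fun x => ((gaussianPDFReal m v x).toNNReal : ENNReal) := rfl
  rw [h, integral_withDensity_eq_integral_smul
    ((measurable_gaussianPDFReal m v).real_toNNReal) f]
  refine integral_congr_ae (Filter.Eventually.of_forall fun y => ?_)
  simp only [NNReal.smul_def, smul_eq_mul, Real.coe_toNNReal _ (gaussianPDFReal_nonneg m v y)]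

lemma key_gaussian_int (a m : ℝ) {b : ℝ} (hb : 0 < b) (v : ℝ≥0) :
    ∫ y, Real.exp (-(y - a) ^ 2 / (2 * b)) ∂(gaussianReal m v)
      = Real.sqrt (b / (b + v)) * Real.exp (-(a - m) ^ 2 / (2 * (b + v))) := by
  by_cases hv : v = 0
  · subst hv
    simp only [gaussianReal_zero_var, NNReal.coe_zero, add_zero]
    rw [integral_dirac, div_self hb.ne', Real.sqrt_one, one_mul]
    congr 1
    ring
  · have hvr : (0 : ℝ) < (v : ℝ) := by positivity
    set vr : ℝ := (v : ℝ) with hvrdef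
    have hs : (0 : ℝ) < b + vr := by linarith
    set s : ℝ := b + vr with hsdef
    set τ : ℝ := b * vr / s with hτdef
    have hτ : 0 < τ := by positivity
    set c : ℝ := (a * vr + b * m) / s with hcdef
    have hπ : (0 : ℝ) < π := Real.pi_pos
    rw [integral_gaussianReal_eq m hv]
    have hpt : (fun y => gaussianPDFReal m v y * Real.exp (-(y - a) ^ 2 / (2 * b)))
        = fun y => ((√(2 * π * vr))⁻¹ * Real.exp (-(a - m) ^ 2 / (2 * s))) *
            Real.exp (-(1 / (2 * τ)) * (y - c) ^ 2) := by
      funext y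
      simp only [gaussianPDFReal, mul_assoc, ← Real.exp_add]
      congr 2
      rw [hτdef, hcdef, hsdef]
      field_simp
      ring
    rw [hpt, integral_const_mul,
      integral_sub_right_eq_self (fun z => Real.exp (-(1 / (2 * τ)) * z ^ 2)) c,
      integral_gaussian]
    have h1 : π / (1 / (2 * τ)) = 2 * π * τ := by field_simp
    rw [h1]
    have h2 : (√(2 * π * vr))⁻¹ * √(2 * π * τ) = √(b / s) := by
      rw [← Real.sqrt_inv, ← Real.sqrt_mul (by positivity)]
      congr 1
      rw [hτdef]
      field_simp
    calc (√(2 * π * vr))⁻¹ * Real.exp (-(a - m) ^ 2 / (2 * s)) * √(2 * π * τ)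
        = ((√(2 * π * vr))⁻¹ * √(2 * π * τ)) * Real.exp (-(a - m) ^ 2 / (2 * s)) := by ring
      _ = √(b / s) * Real.exp (-(a - m) ^ 2 / (2 * s)) := by rw [h2]

theorem gaussian_kernel_within_expectation (μ : ℝ) (σ2 : ℝ≥0) (γ : ℝ) (hγ : 0 < γ) :
    ∫ p : ℝ × ℝ, Real.exp (-(p.1 - p.2) ^ 2 / (2 * γ ^ 2))
        ∂((gaussianReal μ σ2).prod (gaussianReal μ σ2)) =
      γ / Real.sqrt (γ ^ 2 + 2 * (σ2 : ℝ)) := by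
  have hγ2 : (0 : ℝ) < γ ^ 2 := by positivity
  set ν := gaussianReal μ σ2 with hν
  have hcont : Continuous fun p : ℝ × ℝ => Real.exp (-(p.1 - p.2) ^ 2 / (2 * γ ^ 2)) :=
    Real.continuous_exp.comp (((continuous_fst.sub continuous_snd).pow 2).neg.div_const _)
  have hi : Integrable (fun p : ℝ × ℝ => Real.exp (-(p.1 - p.2) ^ 2 / (2 * γ ^ 2)))
      (ν.prod ν) := by
    refine Integrable.mono' (integrable_const 1) hcont.aestronglyMeasurable
      (Filter.Eventually.of_forall fun p => ?_)
    rw [Real.norm_eq_abs, Real.abs_exp]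
    exact Real.exp_le_one_iff.mpr (div_nonpos_of_nonpos_of_nonneg
      (neg_nonpos.mpr (sq_nonneg _)) (by positivity))
  rw [integral_prod _ hi]
  have step1 : ∀ x : ℝ, ∫ y, Real.exp (-(x - y) ^ 2 / (2 * γ ^ 2)) ∂ν
      = √(γ ^ 2 / (γ ^ 2 + σ2)) * Real.exp (-(x - μ) ^ 2 / (2 * (γ ^ 2 + σ2))) := by
    intro x
    rw [show (fun y => Real.exp (-(x - y) ^ 2 / (2 * γ ^ 2)))
        = fun y => Real.exp (-(y - x) ^ 2 / (2 * γ ^ 2)) from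
      funext fun y => by rw [show -(x - y) ^ 2 = -(y - x) ^ 2 by ring]]
    exact key_gaussian_int x μ hγ2 σ2
  simp_rw [step1]
  rw [integral_const_mul, key_gaussian_int μ μ (by positivity : (0:ℝ) < γ ^ 2 + σ2) σ2]
  rw [sub_self, zero_pow two_ne_zero, neg_zero, zero_div, Real.exp_zero, mul_one]
  rw [← Real.sqrt_mul (by positivity)]
  have hd : (0 : ℝ) < γ ^ 2 + σ2 := by positivity
  have hd2 : (0 : ℝ) < γ ^ 2 + σ2 + σ2 := by positivity
  have : γ ^ 2 / (γ ^ 2 + σ2) * ((γ ^ 2 + σ2) / (γ ^ 2 + σ2 + σ2))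
      = γ ^ 2 / (γ ^ 2 + 2 * σ2) := by
    field_simp
    ring
  rw [this, Real.sqrt_div (sq_nonneg γ), Real.sqrt_sq hγ.le]
end

section
/- Let μ_a, μ_b ∈ ℝ, σ_a², σ_b² ≥ 0, and γ > 0, and let X and Y be independent, with X distributed according to the Gaussian measure on ℝ with mean μ_a and variance σ_a² and Y distributed according to the Gaussian measure on ℝ with mean μ_b and variance σ_b². Then E[exp(−(X − Y)²/(2γ²))] = (γ / √(γ² + σ_a² + σ_b²)) · exp(−(μ_a − μ_b)² / (2(γ² + σ_a² + σ_b²))). -/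
open MeasureTheory ProbabilityTheory NNReal Real

lemma gauss_shift {b : ℝ} (μ₀ : ℝ) :
    ∫ z : ℝ, Real.exp (-b * (z - μ₀) ^ 2) = Real.sqrt (π / b) := by
  rw [integral_sub_right_eq_self (fun z => Real.exp (-b * z ^ 2)) μ₀, integral_gaussian]

lemma key (m : ℝ) (s : ℝ≥0) {c : ℝ} (hc : 0 < c) (x : ℝ) :
    ∫ z, Real.exp (-(x - z) ^ 2 / (2 * c)) ∂(gaussianReal m s) =
      Real.sqrt (c / (c + s)) * Real.exp (-(x - m) ^ 2 / (2 * (c + (s : ℝ)))) := by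
  by_cases hs : s = 0
  · subst hs
    simp [Real.sqrt_div_self', Real.div_sqrt, div_self hc.ne']
  · have hs' : (0 : ℝ) < s := by positivity
    have hcs : (0 : ℝ) < c + s := by positivity
    set b : ℝ := (c + s) / (2 * s * c) with hb
    have hbpos : 0 < b := by positivity
    set μ₀ : ℝ := (c * m + s * x) / (c + s) with hμ₀
    rw [gaussianReal_of_var_ne_zero _ hs]
    have hpdf : gaussianPDF m s = fun z => ((gaussianPDFReal m s z).toNNReal : ENNReal) := rfl
    rw [hpdf, integral_withDensity_eq_integral_smul
      ((measurable_gaussianPDFReal m s).real_toNNReal) _]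
    have hpt : ∀ z : ℝ, (Real.toNNReal (gaussianPDFReal m s z)) •
        Real.exp (-(x - z) ^ 2 / (2 * c)) =
        (Real.sqrt (2 * π * s))⁻¹ *
          (Real.exp (-b * (z - μ₀) ^ 2) * Real.exp (-(x - m) ^ 2 / (2 * (c + s)))) := by
      intro z
      rw [NNReal.smul_def, smul_eq_mul, Real.coe_toNNReal _ (gaussianPDFReal_nonneg m s z),
        gaussianPDFReal, mul_assoc, ← Real.exp_add, ← Real.exp_add]
      congr 2
      rw [hb, hμ₀]
      field_simp
      ring
    simp_rw [hpt]
    rw [integral_const_mul, integral_mul_const, gauss_shift]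
    rw [← mul_assoc]
    congr 1
    rw [hb, div_div_eq_mul_div]
    have h2 : π * (2 * (s : ℝ) * c) / (c + s) = (2 * π * s) * (c / (c + s)) := by
      field_simp
    rw [h2, Real.sqrt_mul (show (0:ℝ) ≤ 2 * π * s by positivity) (c / (c + s)), ← mul_assoc,
      inv_mul_cancel₀ (by positivity), one_mul]


theorem gaussian_kernel_cross_expectation (μa μb : ℝ) (σa2 σb2 : ℝ≥0) (γ : ℝ) (hγ : 0 < γ) :
    ∫ p : ℝ × ℝ, Real.exp (-(p.1 - p.2) ^ 2 / (2 * γ ^ 2))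
        ∂((gaussianReal μa σa2).prod (gaussianReal μb σb2)) =
      (γ / Real.sqrt (γ ^ 2 + (σa2 : ℝ) + (σb2 : ℝ))) *
        Real.exp (-(μa - μb) ^ 2 / (2 * (γ ^ 2 + (σa2 : ℝ) + (σb2 : ℝ)))) := by
  have hγ2 : (0 : ℝ) < γ ^ 2 := by positivity
  have hc' : (0 : ℝ) < γ ^ 2 + σb2 := by positivity
  have hint : Integrable (fun p : ℝ × ℝ => Real.exp (-(p.1 - p.2) ^ 2 / (2 * γ ^ 2)))
      ((gaussianReal μa σa2).prod (gaussianReal μb σb2)) := by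
    refine Integrable.mono' (integrable_const 1) ?_ (ae_of_all _ fun p => ?_)
    · exact (Continuous.aestronglyMeasurable (by fun_prop))
    · rw [Real.norm_eq_abs, abs_of_nonneg (Real.exp_nonneg _)]
      exact Real.exp_le_one_iff.mpr (div_nonpos_of_nonpos_of_nonneg
        (neg_nonpos_of_nonneg (sq_nonneg _)) (by positivity))
  rw [integral_prod _ hint]
  simp_rw [key μb σb2 hγ2]
  simp_rw [integral_const_mul]
  simp_rw [show ∀ x : ℝ, (x - μb) ^ 2 = (μb - x) ^ 2 from fun x => by ring]
  rw [key μa σa2 hc' μb]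
  have harg : γ ^ 2 / (γ ^ 2 + σb2) * ((γ ^ 2 + σb2) / (γ ^ 2 + (σa2 : ℝ) + σb2)) =
      γ ^ 2 / (γ ^ 2 + (σa2 : ℝ) + σb2) := by
    field_simp
  have hsq : Real.sqrt (γ ^ 2 / (γ ^ 2 + σb2)) * Real.sqrt ((γ ^ 2 + σb2) / (γ ^ 2 + (σa2 : ℝ) + σb2))
      = γ / Real.sqrt (γ ^ 2 + (σa2 : ℝ) + σb2) := by
    rw [← Real.sqrt_mul (by positivity), harg, Real.sqrt_div (sq_nonneg γ),
      Real.sqrt_sq hγ.le]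
  rw [show (-(μb - μa) ^ 2 : ℝ) = -(μa - μb) ^ 2 by ring,
    show γ ^ 2 + (σb2 : ℝ) + σa2 = γ ^ 2 + (σa2 : ℝ) + σb2 by ring, ← mul_assoc, hsq]
end

section
/- Let μ_a, μ_b ∈ ℝ, σ_a², σ_b² ≥ 0, and γ > 0. Let P_a and P_b be the Gaussian measures on ℝ with means μ_a and μ_b and variances σ_a² and σ_b², respectively, and define the squared maximum mean discrepancy with respect to the Gaussian kernel k(x, y) = exp(−(x − y)²/(2γ²)) as MMD²(P_a, P_b) = E_{X,X' ~ P_a}[k(X, X')] + E_{Y,Y' ~ P_b}[k(Y, Y')] − 2 E_{X ~ P_a, Y ~ P_b}[k(X, Y)], where X, X', Y, Y' are independent. Then MMD²(P_a, P_b) = γ/√(γ² + 2σ_a²) + γ/√(γ² + 2σ_b²) − (2γ / √(γ² + σ_a² + σ_b²)) · exp(−(μ_a − μ_b)² / (2(γ² + σ_a² + σ_b²))). -/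
open MeasureTheory ProbabilityTheory NNReal

open Real in
lemma aux_integral_rexp_quadratic {b : ℝ} (hb : b < 0) (c d : ℝ) :
    ∫ x : ℝ, Real.exp (b * x ^ 2 + c * x + d)
      = Real.sqrt (π / (-b)) * Real.exp (d - c ^ 2 / (4 * b)) := by
  have hb' : b ≠ 0 := ne_of_lt hb
  have h (x : ℝ) : Real.exp (b * x ^ 2 + c * x + d) =
      Real.exp (-(-b) * (x + c / (2 * b)) ^ 2) * Real.exp (d - c ^ 2 / (4 * b)) := by
    rw [← Real.exp_add]
    congr 1
    field_simp
    ring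
  simp_rw [h]
  rw [MeasureTheory.integral_mul_const,
    MeasureTheory.integral_add_right_eq_self (fun x : ℝ => Real.exp (-(-b) * x ^ 2)) (c / (2*b)),
    integral_gaussian]

open Real in
lemma aux_gauss_int (m c : ℝ) (v : ℝ≥0) {t : ℝ} (ht : 0 < t) :
    ∫ z, Real.exp (-(z - c) ^ 2 / (2 * t)) ∂(gaussianReal m v)
      = Real.sqrt (t / (t + v)) * Real.exp (-(m - c) ^ 2 / (2 * (t + v))) := by
  rcases eq_or_ne v 0 with hv | hv
  · subst hv
    simp only [gaussianReal_zero_var, integral_dirac, NNReal.coe_zero, add_zero]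
    rw [div_self ht.ne', Real.sqrt_one, one_mul]
  · have hvpos : (0 : ℝ) < v := lt_of_le_of_ne v.coe_nonneg (by exact_mod_cast hv.symm)
    rw [gaussianReal_of_var_ne_zero _ hv, gaussianPDF_def]
    simp_rw [ENNReal.ofReal]
    rw [integral_withDensity_eq_integral_smul
      ((measurable_gaussianPDFReal m v).real_toNNReal)
      (fun z => Real.exp (-(z - c) ^ 2 / (2 * t)))]
    simp only [NNReal.smul_def, smul_eq_mul,
      Real.coe_toNNReal _ (gaussianPDFReal_nonneg m v _)]
    -- now a Lebesgue integral
    have hb : -((t + (v:ℝ)) / (2 * t * v)) < 0 := neg_neg_iff_pos.mpr (by positivity)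
    have key : ∀ z : ℝ, gaussianPDFReal m v z * Real.exp (-(z - c) ^ 2 / (2 * t))
        = (Real.sqrt (2 * π * v))⁻¹ *
          Real.exp (-((t + v) / (2 * t * v)) * z ^ 2 + (c / t + m / v) * z
            + (-(c ^ 2 / (2 * t) + m ^ 2 / (2 * v)))) := by
      intro z
      rw [gaussianPDFReal]
      rw [mul_assoc, ← Real.exp_add]
      congr 2
      field_simp
      ring
    simp_rw [key]
    rw [MeasureTheory.integral_const_mul, aux_integral_rexp_quadratic hb]
    rw [neg_neg]
    have h1 : (Real.sqrt (2 * (π * v)))⁻¹ * Real.sqrt (π / ((t + (v:ℝ)) / (2 * t * v)))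
        = Real.sqrt (t / (t + v)) := by
      rw [← Real.sqrt_inv, ← Real.sqrt_mul (by positivity)]
      congr 1
      rw [div_div_eq_mul_div, eq_div_iff (by positivity)]
      field_simp
    have htv : (0:ℝ) < t + v := by positivity
    have h2 : -(c ^ 2 / (2 * t) + m ^ 2 / (2 * v)) -
        (c / t + m / v) ^ 2 / (4 * -((t + (v:ℝ)) / (2 * t * v)))
        = -(m - c) ^ 2 / (2 * (t + v)) := by
      rw [mul_neg, div_neg, sub_neg_eq_add]
      field_simp
      ring
    rw [h2, ← mul_assoc]
    rw [show Real.sqrt (2 * π * (v:ℝ)) = Real.sqrt (2 * (π * v)) by ring_nf, h1]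

open Real in
lemma aux_double (μ1 μ2 : ℝ) (v1 v2 : ℝ≥0) {γ : ℝ} (hγ : 0 < γ) :
    (∫ p : ℝ × ℝ, Real.exp (-(p.1 - p.2) ^ 2 / (2 * γ ^ 2))
        ∂((gaussianReal μ1 v1).prod (gaussianReal μ2 v2)))
      = γ / Real.sqrt (γ ^ 2 + v1 + v2) *
        Real.exp (-(μ1 - μ2) ^ 2 / (2 * (γ ^ 2 + v1 + v2))) := by
  have hγ2 : (0:ℝ) < γ ^ 2 := by positivity
  have hcont : Continuous fun p : ℝ × ℝ => Real.exp (-(p.1 - p.2) ^ 2 / (2 * γ ^ 2)) := by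
    fun_prop
  have hint : Integrable (fun p : ℝ × ℝ => Real.exp (-(p.1 - p.2) ^ 2 / (2 * γ ^ 2)))
      ((gaussianReal μ1 v1).prod (gaussianReal μ2 v2)) := by
    refine (integrable_const (1:ℝ)).mono' hcont.aestronglyMeasurable ?_
    filter_upwards with p
    rw [Real.norm_eq_abs, Real.abs_exp]
    exact Real.exp_le_one_iff.mpr
      (div_nonpos_of_nonpos_of_nonneg (neg_nonpos.mpr (sq_nonneg _)) (by positivity))
  rw [MeasureTheory.integral_prod _ hint]
  have inner : ∀ x : ℝ, (∫ y, Real.exp (-(x - y) ^ 2 / (2 * γ ^ 2)) ∂(gaussianReal μ2 v2))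
      = Real.sqrt (γ ^ 2 / (γ ^ 2 + v2)) *
        Real.exp (-(μ2 - x) ^ 2 / (2 * (γ ^ 2 + v2))) := by
    intro x
    have : ∀ y : ℝ, -(x - y) ^ 2 / (2 * γ ^ 2) = -(y - x) ^ 2 / (2 * γ ^ 2) := by
      intro y; ring
    simp_rw [this]
    rw [aux_gauss_int μ2 x v2 hγ2]
  simp_rw [inner]
  rw [MeasureTheory.integral_const_mul]
  have : ∀ x : ℝ, -(μ2 - x) ^ 2 / (2 * (γ ^ 2 + (v2:ℝ))) = -(x - μ2) ^ 2 / (2 * (γ ^ 2 + v2)) := by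
    intro x; ring
  simp_rw [this]
  rw [aux_gauss_int μ1 μ2 v1 (by positivity)]
  rw [← mul_assoc, ← Real.sqrt_mul (by positivity)]
  have hne : γ ^ 2 + (v2:ℝ) ≠ 0 := by positivity
  have h1 : γ ^ 2 / (γ ^ 2 + (v2:ℝ)) * ((γ ^ 2 + v2) / ((γ ^ 2 + v2) + v1))
      = γ ^ 2 / (γ ^ 2 + v1 + v2) := by
    field_simp
    ring
  rw [h1, Real.sqrt_div (sq_nonneg γ), Real.sqrt_sq hγ.le,
    show γ ^ 2 + (v2:ℝ) + v1 = γ ^ 2 + v1 + v2 by ring]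

theorem gaussian_mmd_closed_form (μa μb : ℝ) (σa2 σb2 : ℝ≥0) (γ : ℝ) (hγ : 0 < γ) :
    (∫ p : ℝ × ℝ, Real.exp (-(p.1 - p.2) ^ 2 / (2 * γ ^ 2))
        ∂((gaussianReal μa σa2).prod (gaussianReal μa σa2))) +
      (∫ p : ℝ × ℝ, Real.exp (-(p.1 - p.2) ^ 2 / (2 * γ ^ 2))
        ∂((gaussianReal μb σb2).prod (gaussianReal μb σb2))) -
      2 * (∫ p : ℝ × ℝ, Real.exp (-(p.1 - p.2) ^ 2 / (2 * γ ^ 2))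
        ∂((gaussianReal μa σa2).prod (gaussianReal μb σb2))) =
      γ / Real.sqrt (γ ^ 2 + 2 * (σa2 : ℝ)) + γ / Real.sqrt (γ ^ 2 + 2 * (σb2 : ℝ)) -
        (2 * γ / Real.sqrt (γ ^ 2 + (σa2 : ℝ) + (σb2 : ℝ))) *
          Real.exp (-(μa - μb) ^ 2 / (2 * (γ ^ 2 + (σa2 : ℝ) + (σb2 : ℝ)))) := by
  rw [aux_double μa μa σa2 σa2 hγ, aux_double μb μb σb2 σb2 hγ, aux_double μa μb σa2 σb2 hγ]
  simp only [sub_self, ne_eq, OfNat.ofNat_ne_zero, not_false_eq_true, zero_pow, neg_zero,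
    zero_div, Real.exp_zero, mul_one]
  rw [show γ ^ 2 + (σa2:ℝ) + σa2 = γ ^ 2 + 2 * σa2 by ring,
    show γ ^ 2 + (σb2:ℝ) + σb2 = γ ^ 2 + 2 * σb2 by ring]
  ring
end
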